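/- Let (X,d) be a finite ultrametric space with |Sp(X)| = |X| − 1, and let Y be a nonempty subset of X, regarded as a metric subspace (Y,d). Then |Sp(Y)| = |Y| − 1. -/
import Mathlib


/-- The spectrum of a metric (sub)space: the set of nonzero distances realized
between distinct points of `A`. -/
def spec {X : Type*} [MetricSpace X] (A : Set X) : Set ℝ :=
  {r : ℝ | ∃ x ∈ A, ∃ y ∈ A, x ≠ y ∧ dist x y = r}

lemma spec_finite {X : Type*} [MetricSpace X] [Fintype X] (A : Set X) :
    (spec A).Finite := by
  have h : spec A ⊆ (fun p : X × X => dist p.1 p.2) '' Set.univ := by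
    rintro r ⟨x, hx, y, hy, hxy, hd⟩
    exact ⟨(x, y), trivial, hd⟩
  exact (Set.finite_univ.image _).subset h

lemma spec_insert_le {X : Type*} [MetricSpace X] [Fintype X]
    (hultra : ∀ x y z : X, dist x y ≤ max (dist x z) (dist z y))
    (A : Set X) (hA : A.Nonempty) (z : X) :
    (spec (insert z A)).ncard ≤ (spec A).ncard + 1 := by
  obtain ⟨a₀, ha₀, hmin⟩ := Set.exists_min_image A (fun a => dist z a) (Set.toFinite A) hA
  have key : ∀ y ∈ A, dist z y ≠ dist z a₀ → dist z y ∈ spec A := by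
    intro y hy hne
    have h1 : dist z a₀ < dist z y := lt_of_le_of_ne (hmin y hy) (Ne.symm hne)
    have hya : y ≠ a₀ := by
      intro h; subst h; exact hne rfl
    have hle : dist y a₀ ≤ dist z y := by
      have := hultra y a₀ z
      rw [dist_comm y z] at this
      exact this.trans (max_le le_rfl h1.le)
    have hge : dist z y ≤ dist y a₀ := by
      have := hultra z y a₀
      rw [dist_comm a₀ y] at this
      rcases max_cases (dist z a₀) (dist y a₀) with ⟨he, _⟩ | ⟨he, _⟩
      · rw [he] at this; exact absurd this (not_le.mpr h1)
      · rwa [he] at this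
    exact ⟨y, hy, a₀, ha₀, hya, le_antisymm hle hge⟩
  have hsub : spec (insert z A) ⊆ insert (dist z a₀) (spec A) := by
    rintro r ⟨x, hx, y, hy, hxy, hd⟩
    rcases hx with rfl | hx <;> rcases hy with rfl | hy
    · exact absurd rfl hxy
    · by_cases h : dist x y = dist x a₀
      · exact Or.inl (hd ▸ h)
      · exact Or.inr (hd ▸ key y hy h)
    · by_cases h : dist y x = dist y a₀
      · rw [← hd, dist_comm x y]; exact Or.inl h
      · rw [← hd, dist_comm x y]; exact Or.inr (key x hx h)
    · exact Or.inr ⟨x, hx, y, hy, hxy, hd⟩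
  calc (spec (insert z A)).ncard
      ≤ (insert (dist z a₀) (spec A)).ncard :=
        Set.ncard_le_ncard hsub ((spec_finite A).insert _)
    _ ≤ (spec A).ncard + 1 := Set.ncard_insert_le _ _

lemma spec_union_le {X : Type*} [MetricSpace X] [Fintype X]
    (hultra : ∀ x y z : X, dist x y ≤ max (dist x z) (dist z y))
    (Y : Set X) (hY : Y.Nonempty) (S : Finset X) :
    (spec (Y ∪ ↑S)).ncard ≤ (spec Y).ncard + S.card := by
  classical
  induction S using Finset.induction_on with
  | empty => simp
  | @insert z S hz ih =>
    rw [Finset.coe_insert, Set.union_insert]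
    calc (spec (insert z (Y ∪ ↑S))).ncard
        ≤ (spec (Y ∪ ↑S)).ncard + 1 :=
          spec_insert_le hultra _ (hY.mono Set.subset_union_left) z
      _ ≤ (spec Y).ncard + (insert z S).card := by
          rw [Finset.card_insert_of_notMem hz]; omega

/-- If `(X,d)` is a finite ultrametric space with `|Sp(X)| = |X| − 1` and
`Y` is a nonempty subset of `X` (viewed as a metric subspace), then `|Sp(Y)| = |Y| − 1`. -/
theorem stmt7 {X : Type*} [MetricSpace X] [Fintype X] [Nonempty X]
    (hultra : ∀ x y z : X, dist x y ≤ max (dist x z) (dist z y))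
    (hspec : (spec (Set.univ : Set X)).ncard = Fintype.card X - 1)
    (Y : Set X) (hY : Y.Nonempty) :
    (spec Y).ncard = Y.ncard - 1 := by
  classical
  obtain ⟨y, hy⟩ := hY
  -- upper bound
  have hspec_single : spec ({y} : Set X) = ∅ := by
    ext r
    simp only [spec, Set.mem_setOf_eq, Set.mem_singleton_iff, Set.mem_empty_iff_false,
      iff_false]
    rintro ⟨x, rfl, z, rfl, hxz, -⟩
    exact hxz rfl
  have hdiff_fin : (Y \ {y}).Finite := Set.toFinite _
  have hYeq : ({y} : Set X) ∪ ↑hdiff_fin.toFinset = Y := by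
    rw [Set.Finite.coe_toFinset, Set.union_diff_cancel (Set.singleton_subset_iff.mpr hy)]
  have hcard1 : hdiff_fin.toFinset.card = Y.ncard - 1 := by
    rw [← Set.ncard_eq_toFinset_card _ hdiff_fin, Set.ncard_diff_singleton_of_mem hy]
  have hupper : (spec Y).ncard ≤ Y.ncard - 1 := by
    have := spec_union_le hultra {y} ⟨y, rfl⟩ hdiff_fin.toFinset
    rw [hYeq, hspec_single, Set.ncard_empty, hcard1] at this
    omega
  -- lower bound
  have hcomp_fin : ((Set.univ : Set X) \ Y).Finite := Set.toFinite _
  have hUeq : Y ∪ ↑hcomp_fin.toFinset = (Set.univ : Set X) := by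
    rw [Set.Finite.coe_toFinset, Set.union_diff_cancel' le_rfl (Set.subset_univ Y)]
  have hYle : Y.ncard ≤ Fintype.card X := by
    have := Set.ncard_le_ncard (Set.subset_univ Y) Set.finite_univ
    rwa [Set.ncard_univ, Nat.card_eq_fintype_card] at this
  have hcard2 : hcomp_fin.toFinset.card = Fintype.card X - Y.ncard := by
    rw [← Set.ncard_eq_toFinset_card _ hcomp_fin, Set.ncard_diff (Set.subset_univ Y),
      Set.ncard_univ, Nat.card_eq_fintype_card]
  have hYpos : 0 < Y.ncard := (Set.ncard_pos (Set.toFinite Y)).mpr ⟨y, hy⟩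
  have hlower : Fintype.card X - 1 ≤ (spec Y).ncard + (Fintype.card X - Y.ncard) := by
    have := spec_union_le hultra Y ⟨y, hy⟩ hcomp_fin.toFinset
    rw [hUeq, hspec, hcard2] at this
    omega
  omega
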